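/- arXiv:2110.04213 — 2 statements merged into one kernel-verified Lean document; each statement's English description precedes it below -/
import Mathlib

section
/- Let s₂ be an irrational real number, let a, b, c, d be integers with ad − bc ≠ 0, and let s₁ ∈ ℝ be such that 1, s₁, s₂ are linearly independent over ℚ. Then the map g : ℝ³/ℤ³ → ℝ³/ℤ³ defined by g(x₂, x₃, x₄) = (x₂ + s₂, x₃ + a s₁ + b x₂, x₄ + c s₁ + d x₂) is ergodic with respect to the Haar (Lebesgue) measure on ℝ³/ℤ³. -/
/-!
Conjugate the map to the torus `(Fin 3 → ℝ/ℤ)` and expand the indicator of an invariant set in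
Fourier series. Invariance gives `c(k, l, m) = λ · c(k + lb + md, l, m)` with `|λ| = 1` and
`λ = e(-(k s₂ + (la + mc) s₁))`. If `lb + md ≠ 0`, the coefficients along the infinite orbit
have constant modulus, which the Riemann–Lebesgue lemma forces to be zero. If `lb + md = 0` and
`(k, l, m) ≠ 0`, then `ad - bc ≠ 0` gives `(k, la + mc) ≠ 0`, so `λ ≠ 1` by the rational
independence of `1, s₁, s₂`, and `c = λ c` forces `c = 0`. Hence the indicator is a.e. constant.
-/

open MeasureTheory Filter Topology UnitAddTorus

theorem UnitAddCircle.volume_eq_haarAddCircle :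
    (volume : Measure UnitAddCircle) = AddCircle.haarAddCircle := by
  rw [AddCircle.volume_eq_smul_haarAddCircle, ENNReal.ofReal_one, one_smul]

namespace UnitAddTorus

variable {d : Type*} [Fintype d]

/-- `mFourierCoeff` and the `L²` theory of `UnitAddTorus` are set up with the product of
`AddCircle.haarAddCircle`, which is only propositionally equal to the global `volume`. -/
theorem volume_eq_pi_haarAddCircle :
    (volume : Measure (UnitAddTorus d)) = Measure.pi fun _ => AddCircle.haarAddCircle := by
  rw [volume_pi, UnitAddCircle.volume_eq_haarAddCircle]

theorem mFourierCoeff_eq_integral_volume (f : UnitAddTorus d → ℂ) (n : d → ℤ) :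
    mFourierCoeff f n = ∫ x, mFourier (-n) x * f x := by
  rw [volume_eq_pi_haarAddCircle]; rfl

theorem mFourierCoeff_congr_ae {f g : UnitAddTorus d → ℂ} (h : f =ᵐ[volume] g) :
    mFourierCoeff f = mFourierCoeff g := by
  ext n
  simp only [mFourierCoeff_eq_integral_volume]
  exact integral_congr_ae (h.mono fun x hx => congrArg _ hx)

theorem coeFn_toLp_haar {f : UnitAddTorus d → ℂ}
    (hf : MemLp f 2 (Measure.pi fun _ => AddCircle.haarAddCircle)) :
    hf.toLp f =ᵐ[volume] f := by
  rw [volume_eq_pi_haarAddCircle]; exact hf.coeFn_toLp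

theorem summable_sq_norm_mFourierCoeff {f : UnitAddTorus d → ℂ} (hf : MemLp f 2 volume) :
    Summable fun n => ‖mFourierCoeff f n‖ ^ 2 := by
  rw [volume_eq_pi_haarAddCircle] at hf
  have h := (hasSum_sq_mFourierCoeff (hf.toLp f)).summable
  rwa [mFourierCoeff_congr_ae (coeFn_toLp_haar hf)] at h

theorem tendsto_mFourierCoeff_cofinite_zero {f : UnitAddTorus d → ℂ} (hf : MemLp f 2 volume) :
    Tendsto (mFourierCoeff f) cofinite (𝓝 0) := by
  rw [tendsto_zero_iff_norm_tendsto_zero]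
  have h := (summable_sq_norm_mFourierCoeff hf).tendsto_cofinite_zero.sqrt
  simpa only [Real.sqrt_sq (norm_nonneg _), Real.sqrt_zero] using h

theorem ae_eq_const_of_mFourierCoeff_eq_zero {f : UnitAddTorus d → ℂ} (hf : MemLp f 2 volume)
    (h : ∀ n ≠ 0, mFourierCoeff f n = 0) : f =ᵐ[volume] fun _ => mFourierCoeff f 0 := by
  rw [volume_eq_pi_haarAddCircle] at hf
  have hsum := hasSum_mFourier_series_L2 (hf.toLp f)
  rw [mFourierCoeff_congr_ae (coeFn_toLp_haar hf)] at hsum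
  have hF : hf.toLp f = mFourierCoeff f 0 • mFourierLp 2 0 :=
    hsum.unique (hasSum_single 0 fun n hn => by rw [h n hn, zero_smul])
  rw [volume_eq_pi_haarAddCircle]
  filter_upwards [hf.coeFn_toLp, hF ▸ Lp.coeFn_smul (mFourierCoeff f 0) (mFourierLp 2 0),
    coeFn_mFourierLp (d := d) 2 0] with x hFx hsmul hone
  rw [← hFx, hsmul, Pi.smul_apply, hone, mFourier_zero, ContinuousMap.one_apply, smul_eq_mul,
    mul_one]

theorem mFourierCoeff_eq_mul_of_comp_ae_eq {T : UnitAddTorus d → UnitAddTorus d}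
    (hT : MeasurePreserving T volume volume) {f : UnitAddTorus d → ℂ}
    (hfm : AEStronglyMeasurable f volume) (hf : f ∘ T =ᵐ[volume] f) {n n' : d → ℤ} {c : ℂ}
    (hχ : ∀ x, mFourier (-n) (T x) = c * mFourier (-n') x) :
    mFourierCoeff f n = c * mFourierCoeff f n' := by
  have hm : AEStronglyMeasurable (fun x => mFourier (-n) x * f x) (Measure.map T volume) := by
    rw [hT.map_eq]; exact (mFourier (-n)).continuous.aestronglyMeasurable.mul hfm
  simp only [mFourierCoeff_eq_integral_volume]
  have hmap := integral_map hT.aemeasurable hm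
  rw [hT.map_eq] at hmap
  rw [hmap, ← integral_const_mul c]
  refine integral_congr_ae (hf.mono fun x hx => ?_)
  simp only [Function.comp_apply] at hx ⊢
  rw [hx, hχ, mul_assoc]

theorem preErgodic_of_mFourierCoeff_eq_zero {T : UnitAddTorus d → UnitAddTorus d}
    (hT : ∀ f : UnitAddTorus d → ℂ, MemLp f 2 volume → f ∘ T = f →
      ∀ n ≠ 0, mFourierCoeff f n = 0) :
    PreErgodic T volume where
  aeconst_set s hs hTs := by
    have hf : MemLp (s.indicator 1 : UnitAddTorus d → ℂ) 2 volume :=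
      memLp_const (1 : ℂ) |>.indicator hs
    have hfT : (s.indicator 1 : UnitAddTorus d → ℂ) ∘ T = s.indicator 1 := by
      conv_rhs => rw [← hTs]
      rfl
    have hconst : EventuallyConst (s.indicator 1 : UnitAddTorus d → ℂ) (ae volume) :=
      eventuallyConst_iff_exists_eventuallyEq.2
        ⟨_, ae_eq_const_of_mFourierCoeff_eq_zero hf (hT _ hf hfT)⟩
    have hs := hconst.comp (· = (1 : ℂ))
    simp only [Function.comp_def, Set.indicator_eq_one_iff_mem] at hs
    exact hs

end UnitAddTorus

theorem eq_zero_of_tendsto_cofinite_of_norm_add_eq {E : Type*} [NormedAddCommGroup E]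
    {a : ℤ → E} (ha : Tendsto a cofinite (𝓝 0)) {v : ℤ} (hv : v ≠ 0)
    (h : ∀ k, ‖a (k + v)‖ = ‖a k‖) (k : ℤ) : a k = 0 := by
  have hnorm : ∀ j : ℕ, ‖a (k + j * v)‖ = ‖a k‖ := by
    intro j
    induction j with
    | zero => simp
    | succ j ih => rw [Nat.cast_succ, add_one_mul, ← add_assoc, h, ih]
  have hinj : Function.Injective fun j : ℕ => k + j * v := fun i j hij => by
    simpa [hv] using hij
  have hlim := tendsto_zero_iff_norm_tendsto_zero.1 (ha.comp hinj.tendsto_cofinite)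
  simp only [Function.comp_def, hnorm] at hlim
  exact norm_eq_zero.1 (tendsto_nhds_unique tendsto_const_nhds hlim)

theorem eq_zero_and_eq_zero_of_det_ne_zero {a b c d l m : ℤ} (hdet : a * d - b * c ≠ 0)
    (h₁ : l * a + m * c = 0) (h₂ : l * b + m * d = 0) : l = 0 ∧ m = 0 := by
  have hl : l * (a * d - b * c) = 0 := by linear_combination d * h₁ - c * h₂
  have hm : m * (a * d - b * c) = 0 := by linear_combination a * h₂ - b * h₁
  exact ⟨(mul_eq_zero.1 hl).resolve_right hdet, (mul_eq_zero.1 hm).resolve_right hdet⟩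

theorem eq_zero_and_eq_zero_of_coe_eq_zero {s₁ s₂ : ℝ}
    (hind : LinearIndependent ℚ ![(1 : ℝ), s₁, s₂]) {p q : ℤ}
    (h : ((p * s₁ + q * s₂ : ℝ) : UnitAddCircle) = 0) : p = 0 ∧ q = 0 := by
  obtain ⟨n, hn⟩ := (AddCircle.coe_eq_zero_iff _).1 h
  have hcoeff := Fintype.linearIndependent_iff.1 hind ![-(n : ℚ), p, q] (by
    simp only [Fin.sum_univ_three, Matrix.cons_val, Rat.smul_def]
    push_cast
    rw [zsmul_eq_mul, mul_one] at hn
    linarith)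
  exact ⟨by simpa using hcoeff 1, by simpa using hcoeff 2⟩

namespace MeasurableEquiv

variable {α : Type*} [MeasurableSpace α]

def finThreeArrow : (Fin 3 → α) ≃ᵐ α × α × α :=
  (piFinSuccAbove (fun _ => α) 0).trans (prodCongr (refl α) finTwoArrow)

end MeasurableEquiv

theorem measurePreserving_finThreeArrow {α : Type*} [MeasurableSpace α] (μ : Measure α)
    [SigmaFinite μ] :
    MeasurePreserving MeasurableEquiv.finThreeArrow (Measure.pi fun _ => μ) (μ.prod (μ.prod μ)) :=
  ((MeasurePreserving.id μ).prod (measurePreserving_finTwoArrow μ)).comp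
    (measurePreserving_piFinSuccAbove (fun _ => μ) 0)

theorem measurePreserving_add_right_skewProduct {G H : Type*} [AddGroup G] [MeasurableSpace G]
    [MeasurableAdd G] [AddGroup H] [MeasurableSpace H] [MeasurableAdd₂ H] (μ : Measure G)
    (ν : Measure H) [μ.IsAddRightInvariant] [ν.IsAddRightInvariant] [SFinite μ] [SFinite ν]
    (σ : G) {φ : G → H} (hφ : Measurable φ) :
    MeasurePreserving (fun p : G × H => (p.1 + σ, p.2 + φ p.1)) (μ.prod ν) (μ.prod ν) :=
  (measurePreserving_add_right μ σ).skew_product (g := fun x y => y + φ x)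
    (measurable_snd.add (hφ.comp measurable_fst))
    (ae_of_all _ fun x => (measurePreserving_add_right ν (φ x)).map_eq)

def skewTranslation (σ τ τ' : UnitAddCircle) (b d : ℤ)
    (p : UnitAddCircle × UnitAddCircle × UnitAddCircle) :
    UnitAddCircle × UnitAddCircle × UnitAddCircle :=
  (p.1 + σ, p.2.1 + τ + b • p.1, p.2.2 + τ' + d • p.1)

def skewTranslationPi (σ τ τ' : UnitAddCircle) (b d : ℤ) (x : UnitAddTorus (Fin 3)) :
    UnitAddTorus (Fin 3) :=
  ![x 0 + σ, x 1 + τ + b • x 0, x 2 + τ' + d • x 0]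

section skewTranslation

variable (σ τ τ' : UnitAddCircle) (b d : ℤ)

theorem measurePreserving_skewTranslation :
    MeasurePreserving (skewTranslation σ τ τ' b d) volume volume := by
  have hφ : Measurable fun x : UnitAddCircle => (τ + b • x, τ' + d • x) :=
    (continuous_const.add (continuous_zsmul b)).prodMk
      (continuous_const.add (continuous_zsmul d)) |>.measurable
  have hg : skewTranslation σ τ τ' b d =
      fun p => (p.1 + σ, p.2 + (τ + b • p.1, τ' + d • p.1)) := by
    ext p <;> simp only [skewTranslation, Prod.fst_add, Prod.snd_add, add_assoc]
  rw [hg, Measure.volume_eq_prod, Measure.volume_eq_prod]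
  exact measurePreserving_add_right_skewProduct volume (volume.prod volume) σ hφ

theorem semiconj_finThreeArrow_skewTranslationPi :
    Function.Semiconj MeasurableEquiv.finThreeArrow (skewTranslationPi σ τ τ' b d)
      (skewTranslation σ τ τ' b d) := fun _ => rfl

theorem measurePreserving_skewTranslationPi :
    MeasurePreserving (skewTranslationPi σ τ τ' b d) volume volume :=
  (measurePreserving_finThreeArrow volume).symm.of_semiconj
    (measurePreserving_skewTranslation σ τ τ' b d)
    ((semiconj_finThreeArrow_skewTranslationPi σ τ τ' b d).inverse_left
      MeasurableEquiv.finThreeArrow.left_inv MeasurableEquiv.finThreeArrow.right_inv)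
    (by unfold skewTranslationPi; fun_prop)

theorem mFourier_neg_skewTranslationPi (k l m : ℤ) (x : UnitAddTorus (Fin 3)) :
    mFourier (-![k, l, m]) (skewTranslationPi σ τ τ' b d x) =
      AddCircle.toCircle (-(k • σ + l • τ + m • τ')) *
        mFourier (-![k + l * b + m * d, l, m]) x := by
  simp only [mFourier, ContinuousMap.coe_mk, Fin.prod_univ_three, Pi.neg_apply, fourier_apply,
    skewTranslationPi, Matrix.cons_val]
  simp only [← Circle.coe_mul, ← AddCircle.toCircle_add]
  congr 2
  simp only [smul_add, neg_smul, add_smul, mul_smul]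
  abel

end skewTranslation

theorem mFourierCoeff_eq_zero_of_comp_skewTranslationPi_eq {s₁ s₂ : ℝ}
    (hind : LinearIndependent ℚ ![(1 : ℝ), s₁, s₂]) {a b c d : ℤ} (hdet : a * d - b * c ≠ 0)
    {f : UnitAddTorus (Fin 3) → ℂ} (hf : MemLp f 2 volume)
    (hfT : f ∘ skewTranslationPi s₂ (a * s₁ : ℝ) (c * s₁ : ℝ) b d = f) {n : Fin 3 → ℤ}
    (hn : n ≠ 0) : mFourierCoeff f n = 0 := by
  have hrel : ∀ k l m : ℤ, mFourierCoeff f ![k, l, m] =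
      AddCircle.toCircle (-(((l * a + m * c) * s₁ + k * s₂ : ℝ) : UnitAddCircle)) *
        mFourierCoeff f ![k + l * b + m * d, l, m] := by
    intro k l m
    have hangle : k • (s₂ : UnitAddCircle) + l • ((a * s₁ : ℝ) : UnitAddCircle) +
        m • ((c * s₁ : ℝ) : UnitAddCircle) =
          (((l * a + m * c) * s₁ + k * s₂ : ℝ) : UnitAddCircle) := by
      simp only [← AddCircle.coe_zsmul, ← AddCircle.coe_add, zsmul_eq_mul]
      ring_nf
    rw [← hangle]
    exact mFourierCoeff_eq_mul_of_comp_ae_eq (measurePreserving_skewTranslationPi ..)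
      hf.aestronglyMeasurable (.of_eq hfT) (mFourier_neg_skewTranslationPi _ _ _ b d k l m)
  obtain ⟨k, l, m, rfl⟩ : ∃ k l m : ℤ, n = ![k, l, m] :=
    ⟨n 0, n 1, n 2, by ext i; fin_cases i <;> rfl⟩
  by_cases he : l * b + m * d = 0
  · have hphase :
        AddCircle.toCircle (-(((l * a + m * c) * s₁ + k * s₂ : ℝ) : UnitAddCircle)) ≠ 1 := by
      intro h1
      rw [← AddCircle.toCircle_zero, (AddCircle.injective_toCircle one_ne_zero).eq_iff,
        neg_eq_zero] at h1
      obtain ⟨hlm, hk⟩ := eq_zero_and_eq_zero_of_coe_eq_zero hind (by exact_mod_cast h1)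
      obtain ⟨rfl, rfl⟩ := eq_zero_and_eq_zero_of_det_ne_zero hdet hlm he
      exact hn (by simp [hk])
    have h := hrel k l m
    rw [add_assoc, he, add_zero] at h
    by_contra hc
    exact hphase (Circle.coe_eq_one.1 ((mul_eq_right₀ hc).1 h.symm))
  · have hlim : Tendsto (fun j => mFourierCoeff f ![j, l, m]) cofinite (𝓝 0) :=
      (tendsto_mFourierCoeff_cofinite_zero hf).comp
        (Function.Injective.tendsto_cofinite fun i j h => congrFun h 0)
    refine eq_zero_of_tendsto_cofinite_of_norm_add_eq hlim he (fun j => ?_) k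
    rw [hrel j l m, norm_mul, Circle.norm_coe, one_mul, add_assoc]

theorem ergodic_skew_translation_T3_general
    (s₁ s₂ : ℝ)
    (hind : LinearIndependent ℚ ![(1 : ℝ), s₁, s₂])
    (a b c d : ℤ) (hdet : a * d - b * c ≠ 0) :
    Ergodic
      (fun p : AddCircle (1 : ℝ) × AddCircle (1 : ℝ) × AddCircle (1 : ℝ) =>
        (p.1 + (s₂ : AddCircle (1 : ℝ)),
         p.2.1 + (((a : ℝ) * s₁ : ℝ) : AddCircle (1 : ℝ)) + b • p.1,
         p.2.2 + (((c : ℝ) * s₁ : ℝ) : AddCircle (1 : ℝ)) + d • p.1))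
      volume := by
  refine ⟨measurePreserving_skewTranslation _ _ _ b d, ?_⟩
  have hpi : PreErgodic (skewTranslationPi s₂ (a * s₁ : ℝ) (c * s₁ : ℝ) b d) volume :=
    preErgodic_of_mFourierCoeff_eq_zero fun _ hf hfT _ hn =>
      mFourierCoeff_eq_zero_of_comp_skewTranslationPi_eq hind hdet hf hfT hn
  exact (measurePreserving_finThreeArrow volume).preErgodic_of_preErgodic_semiconj hpi
    (semiconj_finThreeArrow_skewTranslationPi _ _ _ b d)

/-- if `s₂` is irrational, `a b c d` are integers with `ad − bc ≠ 0`, and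
`1, s₁, s₂` are linearly independent over `ℚ`, then the map
`g(x₂,x₃,x₄) = (x₂+s₂, x₃+as₁+bx₂, x₄+cs₁+dx₂)` on `ℝ³/ℤ³` is ergodic for Haar
(Lebesgue) measure. -/
theorem ergodic_skew_translation_T3
    (s₁ s₂ : ℝ) (hs₂ : Irrational s₂)
    (hind : LinearIndependent ℚ ![(1 : ℝ), s₁, s₂])
    (a b c d : ℤ) (hdet : a * d - b * c ≠ 0) :
    Ergodic
      (fun p : AddCircle (1 : ℝ) × AddCircle (1 : ℝ) × AddCircle (1 : ℝ) =>
        (p.1 + (s₂ : AddCircle (1 : ℝ)),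
         p.2.1 + (((a : ℝ) * s₁ : ℝ) : AddCircle (1 : ℝ)) + b • p.1,
         p.2.2 + (((c : ℝ) * s₁ : ℝ) : AddCircle (1 : ℝ)) + d • p.1))
      volume :=
  ergodic_skew_translation_T3_general s₁ s₂ hind a b c d hdet
end

section
/- Let E = ℂ/Λ with Λ = ℤ ⊕ ℤτ, τ = 1/2 + it for some t > 0, and let s be a real structure (anti-holomorphic involution) on the abelian surface A = E × E = ℂ²/Λ² fixing the origin, whose fixed-point set contains the real 2-torus Σ_A spanned by the vectors (τ, 0) and (0, τ) modulo Λ². Then the linear part of s is B∘σ_A where σ_A(x,y) = (x̄, ȳ) and B is the homothety of ratio τ/τ̄; consequently multiplication by τ/τ̄ preserves the lattice ℤ ⊕ ℤτ, and this forces t ∈ {√3/2, 1/2, √3/6}. -/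
/-!
Write the real structure as `B ∘ σ_A`. That `ℝτ × ℝτ` is fixed modulo `Λ²` says that
`u • (B (τ̄, 0) - (τ, 0)) ∈ Λ²` for every real `u`; as `Λ` contains no real line, `B (τ̄, 0) = (τ, 0)`,
likewise `B (0, τ̄) = (0, τ)`, so `B` is the homothety of ratio `μ = τ / τ̄`. Since `τ̄ = 1 - τ ∈ Λ`,
conjugation preserves `Λ`, and `B ∘ σ_A` preserving `Λ²` becomes `μ Λ ⊆ Λ`. Writing `μ = a + bτ`,
i.e. `τ = (a + bτ) τ̄`, imaginary parts give `a = -1` and real parts `b |τ|² = 1`, that is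
`b (1/4 + t²) = 1`, which leaves `b ∈ {1, 2, 3}`.
-/

/-- The lattice `ℤ ⊕ ℤτ ⊂ ℂ`. -/
noncomputable def latticeZt (τ : ℂ) : AddSubgroup ℂ :=
  AddSubgroup.closure {1, τ}

open ComplexConjugate

lemma mem_latticeZt_iff {τ z : ℂ} : z ∈ latticeZt τ ↔ ∃ a b : ℤ, (a : ℂ) + b * τ = z := by
  simp [latticeZt, AddSubgroup.mem_closure_pair, zsmul_eq_mul]

lemma one_mem_latticeZt (τ : ℂ) : (1 : ℂ) ∈ latticeZt τ :=
  AddSubgroup.subset_closure (by simp)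

lemma conj_mem_latticeZt {τ m : ℂ} (hτ : conj τ ∈ latticeZt τ) (hm : m ∈ latticeZt τ) :
    conj m ∈ latticeZt τ := by
  suffices latticeZt τ ≤ (latticeZt τ).comap (conj : ℂ →+* ℂ).toAddMonoidHom from this hm
  refine AddSubgroup.closure_le _ |>.2 ?_
  rintro z (rfl | rfl)
  · simpa using one_mem_latticeZt τ
  · exact hτ

lemma conj_ne_zero_of_im_ne_zero {τ : ℂ} (hτ : τ.im ≠ 0) : conj τ ≠ 0 :=
  (map_ne_zero _).2 fun h => hτ (by simp [h])

lemma eq_zero_of_forall_mul_eq_intCast {x : ℝ} (h : ∀ u : ℝ, ∃ n : ℤ, u * x = n) : x = 0 := by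
  by_contra hx
  obtain ⟨n, hn⟩ := h (1 / (2 * x))
  have : (2 * n : ℝ) = 1 := by rw [← hn]; field_simp
  have : 2 * n = 1 := by exact_mod_cast this
  omega

lemma eq_zero_of_forall_ofReal_mul_mem_latticeZt {τ c : ℂ} (hτ : τ.im ≠ 0)
    (h : ∀ u : ℝ, (u : ℂ) * c ∈ latticeZt τ) : c = 0 := by
  have coords : ∀ u : ℝ, ∃ a b : ℤ, u * c.re = a + b * τ.re ∧ u * c.im = b * τ.im := by
    intro u
    obtain ⟨a, b, hab⟩ := mem_latticeZt_iff.1 (h u)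
    refine ⟨a, b, ?_, ?_⟩
    · simpa using congrArg Complex.re hab.symm
    · simpa using congrArg Complex.im hab.symm
  have him : c.im = 0 := by
    have : c.im / τ.im = 0 := eq_zero_of_forall_mul_eq_intCast fun u => by
      obtain ⟨a, b, -, hb⟩ := coords u
      exact ⟨b, by rw [← mul_div_assoc, hb]; field_simp⟩
    simpa [hτ] using this
  have hre : c.re = 0 := eq_zero_of_forall_mul_eq_intCast fun u => by
    obtain ⟨a, b, ha, hb⟩ := coords u
    have : (b : ℝ) = 0 := by simpa [him, hτ] using hb.symm
    exact ⟨a, by simpa [this] using ha⟩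
  exact Complex.ext hre him

lemma eq_zero_of_forall_ofReal_smul_mem_prod {τ : ℂ} (hτ : τ.im ≠ 0) {w : ℂ × ℂ}
    (h : ∀ u : ℝ, (u : ℂ) • w ∈ (latticeZt τ).prod (latticeZt τ)) : w = 0 :=
  Prod.ext (eq_zero_of_forall_ofReal_mul_mem_latticeZt hτ fun u => (h u).1)
    (eq_zero_of_forall_ofReal_mul_mem_latticeZt hτ fun u => (h u).2)

lemma LinearMap.apply_eq_smul_of_apply_axes {K : Type*} [Field K] {B : (K × K) →ₗ[K] K × K}
    {w μ : K} (hw : w ≠ 0) (h₁ : B (w, 0) = (μ * w, 0)) (h₂ : B (0, w) = (0, μ * w))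
    (z : K × K) : B z = μ • z := by
  have hz : z = (z.1 / w) • (w, 0) + (z.2 / w) • (0, w) := by
    ext <;> simp [hw]
  rw [hz, map_add, map_smul, map_smul, h₁, h₂]
  ext <;> simp <;> field_simp

lemma eq_smul_of_forall_apply_conj_sub_mem {τ : ℂ} (hτ : τ.im ≠ 0) {B : (ℂ × ℂ) →ₗ[ℂ] ℂ × ℂ}
    (h : ∀ u v : ℝ, B (conj ((u : ℂ) * τ), conj ((v : ℂ) * τ)) - ((u : ℂ) * τ, (v : ℂ) * τ) ∈
      (latticeZt τ).prod (latticeZt τ)) (z : ℂ × ℂ) :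
    B z = (τ / conj τ) • z := by
  have hτ' : conj τ ≠ 0 := conj_ne_zero_of_im_ne_zero hτ
  have h₁ : B (conj τ, 0) - (τ, 0) = 0 := eq_zero_of_forall_ofReal_smul_mem_prod hτ fun u => by
    simpa [smul_sub, ← map_smul] using h u 0
  have h₂ : B (0, conj τ) - (0, τ) = 0 := eq_zero_of_forall_ofReal_smul_mem_prod hτ fun v => by
    simpa [smul_sub, ← map_smul] using h 0 v
  rw [sub_eq_zero] at h₁ h₂
  refine LinearMap.apply_eq_smul_of_apply_axes hτ' ?_ ?_ z <;> simp [h₁, h₂, hτ']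

lemma exists_intCast_mul_normSq_eq {τ : ℂ} (hτ : τ.im ≠ 0) (h : τ / conj τ ∈ latticeZt τ) :
    ∃ b : ℤ, b * Complex.normSq τ = 2 * τ.re := by
  have hτ' : conj τ ≠ 0 := conj_ne_zero_of_im_ne_zero hτ
  obtain ⟨a, b, hab⟩ := mem_latticeZt_iff.1 h
  have hE : τ = (a + b * τ) * conj τ := by rw [hab, div_mul_cancel₀ _ hτ']
  have hre := congrArg Complex.re hE
  have him := congrArg Complex.im hE
  simp only [Complex.mul_re, Complex.mul_im, Complex.add_re, Complex.add_im, Complex.conj_re,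
    Complex.conj_im, Complex.intCast_re, Complex.intCast_im] at hre him
  have ha : (a : ℝ) = -1 := by
    apply mul_left_cancel₀ hτ
    linear_combination him
  exact ⟨b, by rw [Complex.normSq_apply]; linear_combination -hre - τ.re * ha⟩

lemma eq_sqrt_three_div_two_or_of_intCast_mul {t : ℝ} (ht : 0 < t) {b : ℤ}
    (hb : b * (1 / 4 + t ^ 2) = 1) :
    t = Real.sqrt 3 / 2 ∨ t = 1 / 2 ∨ t = Real.sqrt 3 / 6 := by
  have hb₀ : 0 < b := by
    have : (0 : ℝ) < b := pos_of_mul_pos_left (hb ▸ one_pos) (by positivity)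
    exact_mod_cast this
  have hb₃ : b < 4 := by
    have : (b : ℝ) < 4 := by nlinarith
    exact_mod_cast this
  have h3 : Real.sqrt 3 ^ 2 = 3 := Real.sq_sqrt (by norm_num)
  have eq_of_sq_eq {s : ℝ} (hs : 0 ≤ s) (h : t ^ 2 = s ^ 2) : t = s :=
    (pow_left_inj₀ ht.le hs two_ne_zero).1 h
  interval_cases b <;> push_cast at hb
  · exact Or.inl <| eq_of_sq_eq (by positivity) (by linear_combination hb - h3 / 4)
  · exact Or.inr <| Or.inl <| eq_of_sq_eq (by positivity) (by linear_combination hb / 2)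
  · exact Or.inr <| Or.inr <| eq_of_sq_eq (by positivity) (by linear_combination hb / 3 - h3 / 36)

/-- let `τ = 1/2 + it`, `t > 0`, `Λ = ℤ ⊕ ℤτ`, and let
`s = B ∘ σ_A` be an anti-holomorphic involution of `A = ℂ²/Λ²` fixing the origin
(here `σ_A(x,y) = (x̄,ȳ)` and `B` is a `ℂ`-linear lift preserving the lattice,
inducing an involution of `A`), whose fixed-point set contains the real torus
`Σ_A = {(uτ, vτ) : u,v ∈ ℝ} mod Λ²`.  Then `B` is the homothety of ratio `τ/τ̄`,
multiplication by `τ/τ̄` preserves `ℤ ⊕ ℤτ`, and `t ∈ {√3/2, 1/2, √3/6}`. -/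
theorem real_structure_fixing_sigmaA_forces_special_t
    (t : ℝ) (ht : 0 < t) (B : (ℂ × ℂ) →ₗ[ℂ] ℂ × ℂ) :
    let τ : ℂ := (1 / 2 : ℂ) + (t : ℂ) * Complex.I
    let L : AddSubgroup (ℂ × ℂ) := (latticeZt τ).prod (latticeZt τ)
    let S : ℂ × ℂ → ℂ × ℂ := fun z => B ((starRingEnd ℂ) z.1, (starRingEnd ℂ) z.2)
    (∀ z ∈ L, S z ∈ L) →
    (∀ z : ℂ × ℂ, S (S z) - z ∈ L) →
    (∀ u v : ℝ, S ((u : ℂ) * τ, (v : ℂ) * τ) - ((u : ℂ) * τ, (v : ℂ) * τ) ∈ L) →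
    (∀ z : ℂ × ℂ, B z = (τ / (starRingEnd ℂ) τ) • z) ∧
    (∀ m : ℂ, m ∈ latticeZt τ → (τ / (starRingEnd ℂ) τ) * m ∈ latticeZt τ) ∧
    (t = Real.sqrt 3 / 2 ∨ t = 1 / 2 ∨ t = Real.sqrt 3 / 6) := by
  intro τ L S hSL _ hfix
  have hτ : τ.im ≠ 0 := by simp [τ, ht.ne']
  have hB := eq_smul_of_forall_apply_conj_sub_mem hτ hfix
  have hconj : conj τ ∈ latticeZt τ := mem_latticeZt_iff.2 ⟨1, -1, by
    norm_num [τ, Complex.ext_iff]⟩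
  have hmul : ∀ m ∈ latticeZt τ, τ / conj τ * m ∈ latticeZt τ := fun m hm => by
    simpa [S, hB] using (hSL (conj m, 0) ⟨conj_mem_latticeZt hconj hm, zero_mem _⟩).1
  obtain ⟨b, hb⟩ := exists_intCast_mul_normSq_eq hτ (by simpa using hmul 1 (one_mem_latticeZt τ))
  refine ⟨hB, hmul, eq_sqrt_three_div_two_or_of_intCast_mul ht (b := b) ?_⟩
  norm_num [τ, Complex.normSq_apply] at hb
  linear_combination hb
end
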